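/- arXiv:2510.26737 — 12 statements merged into one kernel-verified Lean document; each statement's English description precedes it below -/
import Mathlib

section
/- Let A = !![a, b; c, d] be a real 2×2 matrix, and suppose r : ℝ → ℝ and θ : ℝ → ℝ are differentiable functions with r(t) > 0 for all t, such that the curve X(t) = r(t)·(cos θ(t), sin θ(t)) ∈ ℝ² satisfies X'(t) = A · X(t) for all t. Then for every t, r'(t) = r(t)·R_A(θ(t)) and θ'(t) = T_A(θ(t)). -/
open Real Matrix

/-!
Differentiating `X = r • v(θ)` gives `X' = r' • v(θ) + (r θ') • v⊥(θ)`. Since `v(θ), v⊥(θ)` is an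
orthonormal frame, pairing `X' = A X = r • A v(θ)` with `v(θ)` and with `v⊥(θ)` yields
`r' = r R_A(θ)` and `r θ' = r T_A(θ)`; dividing by `r > 0` gives the equation for `θ`.
-/

/-- The radial component `R_A(θ) = ⟨A·v(θ), v(θ)⟩` with `v(θ) = (cos θ, sin θ)`. -/
noncomputable def Rcomp (A : Matrix (Fin 2) (Fin 2) ℝ) (θ : ℝ) : ℝ :=
  A.mulVec ![Real.cos θ, Real.sin θ] ⬝ᵥ ![Real.cos θ, Real.sin θ]

/-- The tangential component `T_A(θ) = ⟨A·v(θ), v⊥(θ)⟩` with `v⊥(θ) = (−sin θ, cos θ)`. -/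
noncomputable def Tcomp (A : Matrix (Fin 2) (Fin 2) ℝ) (θ : ℝ) : ℝ :=
  A.mulVec ![Real.cos θ, Real.sin θ] ⬝ᵥ ![-Real.sin θ, Real.cos θ]

noncomputable def angleVec (θ : ℝ) : Fin 2 → ℝ := ![cos θ, sin θ]

noncomputable def angleVecPerp (θ : ℝ) : Fin 2 → ℝ := ![-sin θ, cos θ]

@[simp]
lemma angleVec_dotProduct_angleVec (θ : ℝ) : angleVec θ ⬝ᵥ angleVec θ = 1 := by
  simp [angleVec, dotProduct, Fin.sum_univ_two, ← sq, cos_sq_add_sin_sq]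

@[simp]
lemma angleVecPerp_dotProduct_angleVecPerp (θ : ℝ) :
    angleVecPerp θ ⬝ᵥ angleVecPerp θ = 1 := by
  simp [angleVecPerp, dotProduct, Fin.sum_univ_two, ← sq, sin_sq_add_cos_sq]

@[simp]
lemma angleVec_dotProduct_angleVecPerp (θ : ℝ) : angleVec θ ⬝ᵥ angleVecPerp θ = 0 := by
  simp [angleVec, angleVecPerp, dotProduct, Fin.sum_univ_two]
  ring

@[simp]
lemma angleVecPerp_dotProduct_angleVec (θ : ℝ) : angleVecPerp θ ⬝ᵥ angleVec θ = 0 := by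
  rw [dotProduct_comm, angleVec_dotProduct_angleVecPerp]

lemma Rcomp_eq (A : Matrix (Fin 2) (Fin 2) ℝ) (θ : ℝ) :
    Rcomp A θ = A *ᵥ angleVec θ ⬝ᵥ angleVec θ := rfl

lemma Tcomp_eq (A : Matrix (Fin 2) (Fin 2) ℝ) (θ : ℝ) :
    Tcomp A θ = A *ᵥ angleVec θ ⬝ᵥ angleVecPerp θ := rfl

lemma hasDerivAt_angleVec_comp {θ : ℝ → ℝ} {θ' t : ℝ} (hθ : HasDerivAt θ θ' t) :
    HasDerivAt (fun s => angleVec (θ s)) (θ' • angleVecPerp (θ t)) t := by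
  refine hasDerivAt_pi.2 fun i => ?_
  fin_cases i
  · simpa [angleVec, angleVecPerp, mul_comm] using hθ.cos
  · simpa [angleVec, angleVecPerp, mul_comm] using hθ.sin

lemma hasDerivAt_smul_angleVec_comp {r θ : ℝ → ℝ} {r' θ' t : ℝ} (hr : HasDerivAt r r' t)
    (hθ : HasDerivAt θ θ' t) :
    HasDerivAt (fun s => r s • angleVec (θ s))
      (r' • angleVec (θ t) + (r t * θ') • angleVecPerp (θ t)) t := by
  rw [add_comm, ← smul_smul]
  exact hr.smul (hasDerivAt_angleVec_comp hθ)

theorem stmt_2_general (A : Matrix (Fin 2) (Fin 2) ℝ)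
    (r θ : ℝ → ℝ) (hr : Differentiable ℝ r) (hθ : Differentiable ℝ θ)
    (hrpos : ∀ t, 0 < r t)
    (hODE : ∀ (t : ℝ) (i : Fin 2),
      HasDerivAt (fun s => r s * ![Real.cos (θ s), Real.sin (θ s)] i)
        (A.mulVec (fun j => r t * ![Real.cos (θ t), Real.sin (θ t)] j) i) t) :
    ∀ t : ℝ, HasDerivAt r (r t * Rcomp A (θ t)) t ∧ HasDerivAt θ (Tcomp A (θ t)) t := by
  intro t
  have hrt : HasDerivAt r (deriv r t) t := (hr t).hasDerivAt
  have hθt : HasDerivAt θ (deriv θ t) t := (hθ t).hasDerivAt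
  have hvel : r t • A *ᵥ angleVec (θ t) =
      deriv r t • angleVec (θ t) + (r t * deriv θ t) • angleVecPerp (θ t) := by
    rw [← mulVec_smul]
    exact (hasDerivAt_pi.2 (hODE t)).unique (hasDerivAt_smul_angleVec_comp hrt hθt)
  have hradial : r t * Rcomp A (θ t) = deriv r t := by
    simpa only [Rcomp_eq, smul_dotProduct, add_dotProduct, angleVec_dotProduct_angleVec,
      angleVecPerp_dotProduct_angleVec, smul_eq_mul, mul_one, mul_zero, add_zero]
      using congrArg (· ⬝ᵥ angleVec (θ t)) hvel
  have htangential : r t * Tcomp A (θ t) = r t * deriv θ t := by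
    simpa only [Tcomp_eq, smul_dotProduct, add_dotProduct, angleVec_dotProduct_angleVecPerp,
      angleVecPerp_dotProduct_angleVecPerp, smul_eq_mul, mul_one, mul_zero, zero_add]
      using congrArg (· ⬝ᵥ angleVecPerp (θ t)) hvel
  refine ⟨hradial ▸ hrt, ?_⟩
  rwa [mul_left_cancel₀ (hrpos t).ne' htangential]

theorem stmt_2 (a b c d : ℝ) (A : Matrix (Fin 2) (Fin 2) ℝ) (hA : A = !![a, b; c, d])
    (r θ : ℝ → ℝ) (hr : Differentiable ℝ r) (hθ : Differentiable ℝ θ)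
    (hrpos : ∀ t, 0 < r t)
    (hODE : ∀ (t : ℝ) (i : Fin 2),
      HasDerivAt (fun s => r s * ![Real.cos (θ s), Real.sin (θ s)] i)
        (A.mulVec (fun j => r t * ![Real.cos (θ t), Real.sin (θ t)] j) i) t) :
    ∀ t : ℝ, HasDerivAt r (r t * Rcomp A (θ t)) t ∧ HasDerivAt θ (Tcomp A (θ t)) t :=
  stmt_2_general A r θ hr hθ hrpos hODE
end

section
/- Let A = !![a, b; c, d] be a real 2×2 matrix. Then the supremum over all unit vectors v ∈ ℝ² (Euclidean norm) of ⟨A · v, v⟩ equals m_R + p (the reactivity of the system X' = AX), and the infimum over all unit vectors v of ⟨A · v, v⟩ equals m_R − p (the attenuation). Both are attained. -/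
open Real Matrix

lemma dot_eq (a b c d : ℝ) (v : Fin 2 → ℝ) :
    (!![a, b; c, d]).mulVec v ⬝ᵥ v = a * v 0 ^2 + (b+c) * (v 0 * v 1) + d * v 1 ^2 := by
  simp [Matrix.mulVec, dotProduct, Fin.sum_univ_two]
  ring

lemma cs_key (α β x y : ℝ) (h : x ^ 2 + y ^ 2 = 1) :
    α * x + β * y ≤ Real.sqrt (α ^ 2 + β ^ 2) := by
  have h1 : (α * x + β * y) ^ 2 + (α * y - β * x) ^ 2 = α ^ 2 + β ^ 2 := by
    linear_combination (α ^ 2 + β ^ 2) * h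
  have h2 : (α * x + β * y) ^ 2 ≤ α ^ 2 + β ^ 2 := by nlinarith [sq_nonneg (α * y - β * x)]
  calc α * x + β * y ≤ |α * x + β * y| := le_abs_self _
    _ = Real.sqrt ((α * x + β * y) ^ 2) := (Real.sqrt_sq_eq_abs _).symm
    _ ≤ _ := Real.sqrt_le_sqrt h2

lemma greatest_aux (a b c d : ℝ) :
    IsGreatest {x : ℝ | ∃ v : Fin 2 → ℝ, v 0 ^ 2 + v 1 ^ 2 = 1 ∧ x = (!![a, b; c, d]).mulVec v ⬝ᵥ v}
      ((a + d) / 2 + Real.sqrt ((a - d) ^ 2 + (b + c) ^ 2) / 2) := by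
  set s := Real.sqrt ((a - d) ^ 2 + (b + c) ^ 2) with hsdef
  have hs0 : 0 ≤ s := Real.sqrt_nonneg _
  have hs : s ^ 2 = (a - d) ^ 2 + (b + c) ^ 2 := Real.sq_sqrt (by positivity)
  constructor
  · -- membership
    by_cases h : s + (a - d) = 0
    · -- then b + c = 0 and value at (0,1) is d
      have hbc : (b + c) ^ 2 = 0 := by nlinarith
      refine ⟨![0, 1], by norm_num, ?_⟩
      rw [dot_eq]
      have : s = d - a := by nlinarith
      simp [this]
      ring
    · have hsp : 0 < s := by
        rcases lt_or_eq_of_le hs0 with h1 | h1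
        · exact h1
        · exfalso; apply h; nlinarith
      have hpos : 0 < s + (a - d) := by
        have h1 : 0 ≤ s + (a - d) := by nlinarith [sq_nonneg (b + c)]
        exact lt_of_le_of_ne h1 (Ne.symm h)
      set v0 := Real.sqrt ((s + (a - d)) / (2 * s)) with hv0def
      have hv0pos : 0 < v0 := Real.sqrt_pos.2 (by positivity)
      have hv0sq : v0 ^ 2 = (s + (a - d)) / (2 * s) := Real.sq_sqrt (by positivity)
      set v1 := (b + c) / (2 * s * v0) with hv1def
      have hv1sq : v1 ^ 2 = (b + c) ^ 2 / (2 * s * (s + (a - d))) := by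
        rw [hv1def, div_pow, mul_pow, mul_pow, hv0sq]
        field_simp
      have hunit : v0 ^ 2 + v1 ^ 2 = 1 := by
        rw [hv0sq, hv1sq]
        field_simp
        nlinarith
      refine ⟨![v0, v1], by simpa using hunit, ?_⟩
      rw [dot_eq]
      simp only [Matrix.cons_val_zero, Matrix.cons_val_one, Matrix.head_cons]
      have hv01 : v0 * v1 = (b + c) / (2 * s) := by
        rw [hv1def]; field_simp
      have hv1sq' : v1 ^ 2 = 1 - v0 ^ 2 := by linarith [hunit]
      rw [hv01, hv1sq', hv0sq]
      field_simp
      nlinarith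
  · -- upper bound
    rintro x ⟨v, hv, rfl⟩
    rw [dot_eq]
    set x0 := v 0
    set y := v 1
    have hv2 : (x0 ^ 2 - y ^ 2) ^ 2 + (2 * x0 * y) ^ 2 = 1 := by
      have : (x0 ^ 2 + y ^ 2) ^ 2 = 1 := by rw [hv]; norm_num
      linear_combination this
    have ht : (a - d) * (x0 ^ 2 - y ^ 2) + (b + c) * (2 * x0 * y) ≤ s :=
      cs_key (a - d) (b + c) _ _ hv2
    have hid : a * x0 ^ 2 + (b + c) * (x0 * y) + d * y ^ 2
        = (a + d) / 2 * (x0 ^ 2 + y ^ 2)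
          + ((a - d) * (x0 ^ 2 - y ^ 2) + (b + c) * (2 * x0 * y)) / 2 := by ring
    rw [hid, hv]
    linarith

theorem stmt_3 (a b c d : ℝ) (A : Matrix (Fin 2) (Fin 2) ℝ) (hA : A = !![a, b; c, d]) :
    IsGreatest {x : ℝ | ∃ v : Fin 2 → ℝ, v 0 ^ 2 + v 1 ^ 2 = 1 ∧ x = A.mulVec v ⬝ᵥ v}
      ((a + d) / 2 + (1 / 2) * Real.sqrt ((a - d) ^ 2 + (b + c) ^ 2)) ∧
    IsLeast {x : ℝ | ∃ v : Fin 2 → ℝ, v 0 ^ 2 + v 1 ^ 2 = 1 ∧ x = A.mulVec v ⬝ᵥ v}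
      ((a + d) / 2 - (1 / 2) * Real.sqrt ((a - d) ^ 2 + (b + c) ^ 2)) := by
  subst hA
  constructor
  · have := greatest_aux a b c d
    convert this using 2
    ring
  · have hneg := greatest_aux (-a) (-b) (-c) (-d)
    have hsq : Real.sqrt ((-a - -d) ^ 2 + (-b + -c) ^ 2)
        = Real.sqrt ((a - d) ^ 2 + (b + c) ^ 2) := by ring_nf
    rw [hsq] at hneg
    obtain ⟨⟨v, hv, hval⟩, hub⟩ := hneg
    constructor
    · refine ⟨v, hv, ?_⟩
      have : (!![-a, -b; -c, -d]).mulVec v ⬝ᵥ v = -((!![a, b; c, d]).mulVec v ⬝ᵥ v) := by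
        rw [dot_eq, dot_eq]; ring
      rw [this] at hval
      linarith
    · rintro x ⟨w, hw, rfl⟩
      have h1 : (!![-a, -b; -c, -d]).mulVec w ⬝ᵥ w = -((!![a, b; c, d]).mulVec w ⬝ᵥ w) := by
        rw [dot_eq, dot_eq]; ring
      have h2 := hub ⟨w, hw, rfl⟩
      rw [h1] at h2
      linarith
end

section
/- Let A = !![a, b; c, d] be a real 2×2 matrix. Then the function T_A is differentiable with T_A'(θ) = −2·(R_A(θ) − m_R) for every θ ∈ ℝ. In particular, if T_A(θ*) = 0 and R_A(θ*) > m_R then T_A'(θ*) < 0 (so θ* is an attracting equilibrium of the angular dynamics θ' = T_A(θ)), and if T_A(θ*) = 0 and R_A(θ*) < m_R then T_A'(θ*) > 0 (so θ* is a repelling equilibrium). -/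
open Real Matrix

/-! Differentiating `v` gives `v⊥` and differentiating `v⊥` gives `-v`, so
`T_A' = ⟨A v⊥, v⊥⟩ - ⟨A v, v⟩`. As `v, v⊥` is an orthonormal basis,
`⟨A v⊥, v⊥⟩ + ⟨A v, v⟩ = tr A = 2 m_R`, hence `T_A' = -2 (R_A - m_R)`. -/

theorem Rcomp_apply (A : Matrix (Fin 2) (Fin 2) ℝ) (θ : ℝ) :
    Rcomp A θ = (A 0 0 * cos θ + A 0 1 * sin θ) * cos θ
      + (A 1 0 * cos θ + A 1 1 * sin θ) * sin θ := by
  simp [Rcomp, mulVec, dotProduct, Fin.sum_univ_two]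

theorem Tcomp_eq_s6 (A : Matrix (Fin 2) (Fin 2) ℝ) :
    Tcomp A = fun θ => (A 1 0 * cos θ + A 1 1 * sin θ) * cos θ
      - (A 0 0 * cos θ + A 0 1 * sin θ) * sin θ := by
  funext θ
  simp only [Tcomp, mulVec, dotProduct, Fin.sum_univ_two, Fin.isValue, cons_val_zero,
    cons_val_one, cons_val_fin_one]
  ring

theorem hasDerivAt_Tcomp (A : Matrix (Fin 2) (Fin 2) ℝ) (θ : ℝ) :
    HasDerivAt (Tcomp A) (-2 * (Rcomp A θ - A.trace / 2)) θ := by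
  have hc := hasDerivAt_cos θ
  have hs := hasDerivAt_sin θ
  rw [Tcomp_eq_s6]
  refine ((((hc.const_mul _).add (hs.const_mul _)).mul hc).sub
    (((hc.const_mul _).add (hs.const_mul _)).mul hs)).congr_deriv ?_
  rw [Rcomp_apply, trace_fin_two, Pi.add_apply, Pi.add_apply]
  linear_combination (A 0 0 + A 1 1) * sin_sq_add_cos_sq θ

theorem stmt_6 (a b c d : ℝ) (A : Matrix (Fin 2) (Fin 2) ℝ) (hA : A = !![a, b; c, d])
    (mR : ℝ) (hmR : mR = (a + d) / 2) :
    (∀ θ : ℝ, HasDerivAt (Tcomp A) (-2 * (Rcomp A θ - mR)) θ) ∧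
    (∀ θstar : ℝ, Tcomp A θstar = 0 → Rcomp A θstar > mR → deriv (Tcomp A) θstar < 0) ∧
    (∀ θstar : ℝ, Tcomp A θstar = 0 → Rcomp A θstar < mR → deriv (Tcomp A) θstar > 0) := by
  have hmR' : mR = A.trace / 2 := by simp [hA, hmR, trace_fin_two]
  subst hmR'
  refine ⟨hasDerivAt_Tcomp A, fun θ _ hR => ?_, fun θ _ hR => ?_⟩
  · rw [(hasDerivAt_Tcomp A θ).deriv]
    linarith
  · rw [(hasDerivAt_Tcomp A θ).deriv]
    linarith
end

section
/- Let A = !![a, b; c, d] be a real 2×2 matrix and let J = !![0, −1; 1, 0]. Then a real number μ is an orthovalue of A (i.e. there exists a nonzero V ∈ ℝ² with A · V = μ • (J · V)) if and only if p² ≥ m_R² and (μ = m_T + √(p² − m_R²) or μ = m_T − √(p² − m_R²)). -/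
open Real Matrix

theorem stmt_10 (a b c d : ℝ) (A J : Matrix (Fin 2) (Fin 2) ℝ)
    (hA : A = !![a, b; c, d]) (hJ : J = !![0, -1; 1, 0])
    (mR mT p : ℝ) (hmR : mR = (a + d) / 2) (hmT : mT = (c - b) / 2)
    (hp : p = (1 / 2) * Real.sqrt ((a - d) ^ 2 + (b + c) ^ 2)) (μ : ℝ) :
    (∃ V : Fin 2 → ℝ, V ≠ 0 ∧ A.mulVec V = μ • J.mulVec V) ↔
      (p ^ 2 ≥ mR ^ 2 ∧
        (μ = mT + Real.sqrt (p ^ 2 - mR ^ 2) ∨ μ = mT - Real.sqrt (p ^ 2 - mR ^ 2))) := by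
  have hnn : (0:ℝ) ≤ (a - d) ^ 2 + (b + c) ^ 2 := by positivity
  have hp2 : p ^ 2 = ((a - d) ^ 2 + (b + c) ^ 2) / 4 := by
    rw [hp, mul_pow, Real.sq_sqrt hnn]; ring
  have hDval : p ^ 2 - mR ^ 2 = (b + c) ^ 2 / 4 - a * d := by
    rw [hp2, hmR]; ring
  have hM : A - μ • J = !![a, b + μ; c - μ, d] := by
    subst hA hJ
    ext i j
    fin_cases i <;> fin_cases j <;>
      simp [Matrix.sub_apply, Matrix.smul_apply]
  have hdet : (A - μ • J).det = a * d - (b + μ) * (c - μ) := by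
    rw [hM, Matrix.det_fin_two_of]
  constructor
  · rintro ⟨V, hV, hAV⟩
    have h0 : (A - μ • J).mulVec V = 0 := by
      rw [Matrix.sub_mulVec, Matrix.smul_mulVec, hAV, sub_self]
    have hd0 : (A - μ • J).det = 0 :=
      (Matrix.exists_mulVec_eq_zero_iff).mp ⟨V, hV, h0⟩
    rw [hdet] at hd0
    have hsq : (μ - mT) ^ 2 = p ^ 2 - mR ^ 2 := by
      rw [hDval, hmT]; linear_combination hd0
    have hgn : p ^ 2 - mR ^ 2 ≥ 0 := by rw [← hsq]; positivity
    refine ⟨by linarith, ?_⟩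
    have habs : Real.sqrt (p ^ 2 - mR ^ 2) = |μ - mT| := by
      rw [← hsq, Real.sqrt_sq_eq_abs]
    rcases abs_cases (μ - mT) with ⟨h1, _⟩ | ⟨h1, _⟩
    · left; rw [habs, h1]; ring
    · right; rw [habs, h1]; ring
  · rintro ⟨hge, hμ⟩
    have hs := Real.sq_sqrt (show (0:ℝ) ≤ p ^ 2 - mR ^ 2 by linarith)
    have hsq : (μ - mT) ^ 2 = p ^ 2 - mR ^ 2 := by
      rcases hμ with h | h <;> rw [h] <;> linear_combination hs
    have hd0 : (A - μ • J).det = 0 := by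
      rw [hdet]
      rw [hDval, hmT] at hsq
      linear_combination hsq
    obtain ⟨V, hV, h0⟩ := (Matrix.exists_mulVec_eq_zero_iff).mpr hd0
    refine ⟨V, hV, ?_⟩
    rw [Matrix.sub_mulVec, Matrix.smul_mulVec, sub_eq_zero] at h0
    exact h0
end

section
/- Let A = !![a, b; c, d] be a real 2×2 matrix. Then there exists γ ∈ ℝ such that M_γ⁻¹ · A · M_γ = !![m_R + p, −m_T; m_T, m_R − p], where M_γ is the rotation matrix by angle γ. (This is the R-centered standard form of A.) -/
open Real Matrix

/-!
Conjugating by the rotation `M_γ` fixes the rotation-invariant part `m_R • 1 + m_T • J` of `A`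
(`J` the rotation by `π/2`) and rotates the traceless symmetric part `!![s, t; t, -s]`, with
`s = (a - d)/2`, `t = (b + c)/2`, by the angle `-2γ`. Choosing `2γ` to be the polar angle of
`(s, t)` makes that part diagonal, equal to `!![p, 0; 0, -p]`.
-/

noncomputable def rotationMatrix (γ : ℝ) : Matrix (Fin 2) (Fin 2) ℝ :=
  !![cos γ, -sin γ; sin γ, cos γ]

lemma rotationMatrix_zero : rotationMatrix 0 = 1 := by
  simp [rotationMatrix, one_fin_two]

lemma rotationMatrix_mul (α β : ℝ) :
    rotationMatrix α * rotationMatrix β = rotationMatrix (α + β) := by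
  simp only [rotationMatrix, mul_fin_two, cos_add, sin_add]
  congr 1; ring_nf

lemma inv_rotationMatrix (γ : ℝ) : (rotationMatrix γ)⁻¹ = rotationMatrix (-γ) :=
  inv_eq_left_inv (by rw [rotationMatrix_mul, neg_add_cancel, rotationMatrix_zero])

lemma inv_rotationMatrix_mul_mul_rotationMatrix (a b c d γ : ℝ) :
    (rotationMatrix γ)⁻¹ * !![a, b; c, d] * rotationMatrix γ =
      !![(a + d) / 2 + ((a - d) / 2 * cos (2 * γ) + (b + c) / 2 * sin (2 * γ)),
        -((c - b) / 2) + ((b + c) / 2 * cos (2 * γ) - (a - d) / 2 * sin (2 * γ));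
        (c - b) / 2 + ((b + c) / 2 * cos (2 * γ) - (a - d) / 2 * sin (2 * γ)),
        (a + d) / 2 - ((a - d) / 2 * cos (2 * γ) + (b + c) / 2 * sin (2 * γ))] := by
  rw [inv_rotationMatrix]
  simp only [rotationMatrix, mul_fin_two, cos_neg, sin_neg, cos_two_mul', sin_two_mul]
  have h := sin_sq_add_cos_sq γ
  ext i j
  fin_cases i <;> fin_cases j <;>
    simp only [Fin.zero_eta, Fin.mk_one, Fin.isValue, of_apply, cons_val', cons_val_zero, cons_val_one,
      cons_val_fin_one]
  · linear_combination (a + d) / 2 * h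
  · linear_combination (b - c) / 2 * h
  · linear_combination (c - b) / 2 * h
  · linear_combination (a + d) / 2 * h

lemma exists_eq_sqrt_mul_cos_and_eq_sqrt_mul_sin (x y : ℝ) :
    ∃ θ : ℝ, x = √(x ^ 2 + y ^ 2) * cos θ ∧ y = √(x ^ 2 + y ^ 2) * sin θ :=
  ⟨Complex.arg ⟨x, y⟩,
    by simpa [Complex.norm_eq_sqrt_sq_add_sq] using (Complex.norm_mul_cos_arg ⟨x, y⟩).symm,
    by simpa [Complex.norm_eq_sqrt_sq_add_sq] using (Complex.norm_mul_sin_arg ⟨x, y⟩).symm⟩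

theorem stmt_12 (a b c d : ℝ) (A : Matrix (Fin 2) (Fin 2) ℝ) (hA : A = !![a, b; c, d])
    (mR mT p : ℝ) (hmR : mR = (a + d) / 2) (hmT : mT = (c - b) / 2)
    (hp : p = (1 / 2) * Real.sqrt ((a - d) ^ 2 + (b + c) ^ 2)) :
    ∃ γ : ℝ,
      (!![Real.cos γ, -Real.sin γ; Real.sin γ, Real.cos γ])⁻¹ * A *
          !![Real.cos γ, -Real.sin γ; Real.sin γ, Real.cos γ] =
        !![mR + p, -mT; mT, mR - p] := by
  obtain ⟨θ, hs, ht⟩ := exists_eq_sqrt_mul_cos_and_eq_sqrt_mul_sin ((a - d) / 2) ((b + c) / 2)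
  have hp' : p = √(((a - d) / 2) ^ 2 + ((b + c) / 2) ^ 2) := by
    rw [hp, show ((a - d) / 2) ^ 2 + ((b + c) / 2) ^ 2 = (1 / 2) ^ 2 * ((a - d) ^ 2 + (b + c) ^ 2)
      by ring, sqrt_mul (by norm_num), sqrt_sq (by norm_num)]
  rw [← hp'] at hs ht
  have h_diag : (a - d) / 2 * cos θ + (b + c) / 2 * sin θ = p := by
    linear_combination cos θ * hs + sin θ * ht + p * sin_sq_add_cos_sq θ
  have h_off : (b + c) / 2 * cos θ - (a - d) / 2 * sin θ = 0 := by
    linear_combination cos θ * ht - sin θ * hs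
  refine ⟨θ / 2, ?_⟩
  change (rotationMatrix (θ / 2))⁻¹ * A * rotationMatrix (θ / 2) = _
  rw [hA, inv_rotationMatrix_mul_mul_rotationMatrix, mul_div_cancel₀ θ two_ne_zero, h_diag, h_off,
    hmR, hmT]
  simp only [add_zero]
end

section
/- Let A = !![a, b; c, d] be a real 2×2 matrix. Then there exists γ ∈ ℝ such that M_γ⁻¹ · A · M_γ = !![m_R, −(m_T − p); m_T + p, m_R], where M_γ is the rotation matrix by angle γ. (This is the T-centered standard form of A.) -/
open Real Matrix

lemma exists_cos_sin_aux (x y : ℝ) (h : x ^ 2 + y ^ 2 = 1) :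
    ∃ φ : ℝ, Real.cos φ = x ∧ Real.sin φ = y := by
  rcases le_or_gt 0 y with hy | hy
  · refine ⟨Real.arccos x, Real.cos_arccos (by nlinarith) (by nlinarith), ?_⟩
    rw [Real.sin_arccos, show 1 - x ^ 2 = y ^ 2 by linarith, Real.sqrt_sq hy]
  · refine ⟨-Real.arccos x, ?_, ?_⟩
    · rw [Real.cos_neg]; exact Real.cos_arccos (by nlinarith) (by nlinarith)
    · rw [Real.sin_neg, Real.sin_arccos, show 1 - x ^ 2 = y ^ 2 by linarith,
        Real.sqrt_sq_eq_abs, abs_of_neg hy, neg_neg]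

theorem stmt_13 (a b c d : ℝ) (A : Matrix (Fin 2) (Fin 2) ℝ) (hA : A = !![a, b; c, d])
    (mR mT p : ℝ) (hmR : mR = (a + d) / 2) (hmT : mT = (c - b) / 2)
    (hp : p = (1 / 2) * Real.sqrt ((a - d) ^ 2 + (b + c) ^ 2)) :
    ∃ γ : ℝ,
      (!![Real.cos γ, -Real.sin γ; Real.sin γ, Real.cos γ])⁻¹ * A *
          !![Real.cos γ, -Real.sin γ; Real.sin γ, Real.cos γ] =
        !![mR, -(mT - p); mT + p, mR] := by
  subst hA hmR hmT
  set u : ℝ := (a - d) / 2 with hu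
  set v : ℝ := (b + c) / 2 with hv
  have hp0 : 0 ≤ p := by
    rw [hp]; positivity
  have hpsq : p ^ 2 = u ^ 2 + v ^ 2 := by
    have h1 : Real.sqrt ((a - d) ^ 2 + (b + c) ^ 2) ^ 2 = (a - d) ^ 2 + (b + c) ^ 2 :=
      Real.sq_sqrt (by positivity)
    rw [hp, mul_pow, h1, hu, hv]; ring
  -- find φ with u cos φ + v sin φ = 0 and v cos φ - u sin φ = p
  obtain ⟨φ, h1, h2⟩ : ∃ φ : ℝ, u * Real.cos φ + v * Real.sin φ = 0 ∧
      v * Real.cos φ - u * Real.sin φ = p := by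
    rcases eq_or_lt_of_le hp0 with hpz | hppos
    · have huv : u ^ 2 + v ^ 2 = 0 := by rw [← hpsq, ← hpz]; ring
      have hu0 : u = 0 := by nlinarith
      have hv0 : v = 0 := by nlinarith
      exact ⟨0, by rw [hu0, hv0]; ring, by rw [hu0, hv0, ← hpz]; ring⟩
    · have hpne : p ≠ 0 := ne_of_gt hppos
      obtain ⟨φ, hc, hs⟩ := exists_cos_sin_aux (v / p) (-u / p)
        (by field_simp; nlinarith)
      exact ⟨φ, by rw [hc, hs]; field_simp; ring,
        by rw [hc, hs]; field_simp; nlinarith⟩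
  refine ⟨φ / 2, ?_⟩
  have hpyth : Real.sin (φ / 2) ^ 2 + Real.cos (φ / 2) ^ 2 = 1 := Real.sin_sq_add_cos_sq _
  have hcos2 : Real.cos φ = Real.cos (φ / 2) ^ 2 - Real.sin (φ / 2) ^ 2 := by
    have h := Real.cos_two_mul (φ / 2)
    rw [show 2 * (φ / 2) = φ by ring] at h
    nlinarith
  have hsin2 : Real.sin φ = 2 * Real.sin (φ / 2) * Real.cos (φ / 2) := by
    have h := Real.sin_two_mul (φ / 2)
    rw [show 2 * (φ / 2) = φ by ring] at h
    exact h
  set C := Real.cos (φ / 2)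
  set S := Real.sin (φ / 2)
  have hinv : (!![C, -S; S, C])⁻¹ = !![C, S; -S, C] := by
    apply Matrix.inv_eq_left_inv
    rw [Matrix.mul_fin_two, Matrix.one_fin_two]
    ext i j
    fin_cases i <;> fin_cases j <;> simp <;> first | linear_combination hpyth | ring
  rw [hinv, Matrix.mul_fin_two, Matrix.mul_fin_two]
  rw [hcos2] at h1 h2
  rw [hsin2] at h1 h2
  rw [hu, hv] at h1 h2
  ext i j
  fin_cases i <;> fin_cases j <;> simp
  · linear_combination h1 + ((a + d) / 2) * hpyth
  · linear_combination h2 + ((b - c) / 2) * hpyth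
  · linear_combination h2 + ((c - b) / 2) * hpyth
  · linear_combination -h1 + ((a + d) / 2) * hpyth
end

section
/- Fix δ_R ∈ (0, π/2), δ_T ∈ [0, π/2), and ρ > 0, and let A be the real 2×2 matrix A = (ρ/(1 − cos(2·δ_R))) • !![−cos(2·δ_R), 1 + cos(2·δ_T); 1 − cos(2·δ_T), −cos(2·δ_R)]. Then, with m_R, m_T, p computed from A: p = ρ/(1 − cos(2·δ_R)) > 0, m_R = −p·cos(2·δ_R), m_T = −p·cos(2·δ_T), and hence m_R + p = ρ (the reactivity of A equals ρ), cos(2·δ_R) = −m_R/p (A has reactivity radius δ_R), cos(2·δ_T) = −m_T/p (A has eigenvector separation radius δ_T), p² ≥ m_T² (A has real eigenvalues), and p² > m_R² (A has real orthovalues). -/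
open Real Matrix

theorem stmt_14 (δR δT ρ : ℝ) (hδR : δR ∈ Set.Ioo 0 (Real.pi / 2))
    (hδT : δT ∈ Set.Ico 0 (Real.pi / 2)) (hρ : 0 < ρ)
    (A : Matrix (Fin 2) (Fin 2) ℝ)
    (hA : A = (ρ / (1 - Real.cos (2 * δR))) •
      !![-Real.cos (2 * δR), 1 + Real.cos (2 * δT);
         1 - Real.cos (2 * δT), -Real.cos (2 * δR)])
    (mR mT p : ℝ) (hmR : mR = (A 0 0 + A 1 1) / 2) (hmT : mT = (A 1 0 - A 0 1) / 2)
    (hp : p = (1 / 2) * Real.sqrt ((A 0 0 - A 1 1) ^ 2 + (A 0 1 + A 1 0) ^ 2)) :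
    p = ρ / (1 - Real.cos (2 * δR)) ∧ 0 < p ∧
    mR = -p * Real.cos (2 * δR) ∧ mT = -p * Real.cos (2 * δT) ∧
    mR + p = ρ ∧
    Real.cos (2 * δR) = -mR / p ∧ Real.cos (2 * δT) = -mT / p ∧
    p ^ 2 ≥ mT ^ 2 ∧ p ^ 2 > mR ^ 2 := by
  obtain ⟨hR0, hR1⟩ := hδR
  obtain ⟨hT0, hT1⟩ := hδT
  have hpi := Real.pi_pos
  have hcR1 : Real.cos (2 * δR) < 1 := by
    have := Real.cos_lt_cos_of_nonneg_of_le_pi (x := 0) (y := 2 * δR) (le_refl 0)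
      (by linarith) (by linarith)
    simpa using this
  have hcRm1 : -1 < Real.cos (2 * δR) := by
    have := Real.cos_lt_cos_of_nonneg_of_le_pi (by linarith : (0:ℝ) ≤ 2 * δR) (le_refl Real.pi)
      (by linarith)
    simpa using this
  have hcT1 : Real.cos (2 * δT) ≤ 1 := Real.cos_le_one _
  have hcTm1 : -1 < Real.cos (2 * δT) := by
    have := Real.cos_lt_cos_of_nonneg_of_le_pi (by linarith : (0:ℝ) ≤ 2 * δT) (le_refl Real.pi)
      (by linarith)
    simpa using this
  set cR := Real.cos (2 * δR) with hcR
  set cT := Real.cos (2 * δT) with hcT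
  set k := ρ / (1 - cR) with hk
  have hk0 : 0 < k := div_pos hρ (by linarith)
  have hA00 : A 0 0 = k * (-cR) := by rw [hA]; simp
  have hA11 : A 1 1 = k * (-cR) := by rw [hA]; simp
  have hA01 : A 0 1 = k * (1 + cT) := by rw [hA]; simp
  have hA10 : A 1 0 = k * (1 - cT) := by rw [hA]; simp
  have hpk : p = k := by
    rw [hp, hA00, hA11, hA01, hA10]
    have : (k * (-cR) - k * (-cR)) ^ 2 + (k * (1 + cT) + k * (1 - cT)) ^ 2 = (2 * k) ^ 2 := by
      ring
    rw [this, Real.sqrt_sq (by linarith)]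
    ring
  have hmR' : mR = -k * cR := by rw [hmR, hA00, hA11]; ring
  have hmT' : mT = -k * cT := by rw [hmT, hA10, hA01]; ring
  refine ⟨hpk, hpk ▸ hk0, by rw [hmR', hpk], by rw [hmT', hpk], ?_, ?_, ?_, ?_, ?_⟩
  · rw [hmR', hpk, hk]
    have hne : 1 - cR ≠ 0 := by linarith
    field_simp
    ring
  · rw [hmR', hpk]; field_simp
  · rw [hmT', hpk]; field_simp
  · rw [hmT', hpk]
    have h1 : cT ^ 2 ≤ 1 := by nlinarith
    nlinarith [mul_le_mul_of_nonneg_left h1 (le_of_lt (mul_pos hk0 hk0))]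
  · rw [hmR', hpk]
    have h1 : cR ^ 2 < 1 := by nlinarith
    nlinarith [mul_lt_mul_of_pos_left h1 (mul_pos hk0 hk0)]
end

section
/- For any real numbers λ₂ ≤ λ₁ < 0 and any ρ > 0, there exists a real 2×2 matrix A such that trace(A) = λ₁ + λ₂, det(A) = λ₁·λ₂ (so that λ₁ and λ₂ are the eigenvalues of A), and the supremum over all Euclidean unit vectors v ∈ ℝ² of ⟨A · v, v⟩ equals ρ (i.e. A has reactivity ρ). In particular, a reactive attractor with eigenvalues λ₁, λ₂ can have arbitrarily large reactivity. -/
/-!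
Write `λ₁ = ρ - s²`, `λ₂ = ρ - t²` and take `A` upper triangular with diagonal `λ₁, λ₂` and
corner `2 s t`. Its trace and determinant are those of the diagonal, while
`ρ ‖v‖² - ⟨A v, v⟩ = (s v₀ - t v₁)²`, so `⟨A v, v⟩ ≤ ρ` on the unit circle, with equality at the
unit vector proportional to `(t, s)`.
-/

open Real Matrix

def reactiveMatrix (ρ s t : ℝ) : Matrix (Fin 2) (Fin 2) ℝ :=
  !![ρ - s ^ 2, 2 * s * t; 0, ρ - t ^ 2]

namespace reactiveMatrix

variable (ρ s t : ℝ)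

theorem trace_eq : (reactiveMatrix ρ s t).trace = (ρ - s ^ 2) + (ρ - t ^ 2) := by
  simp [reactiveMatrix, trace_fin_two]

theorem det_eq : (reactiveMatrix ρ s t).det = (ρ - s ^ 2) * (ρ - t ^ 2) := by
  simp [reactiveMatrix, det_fin_two]

theorem sub_mulVec_dotProduct (v : Fin 2 → ℝ) :
    ρ * (v 0 ^ 2 + v 1 ^ 2) - reactiveMatrix ρ s t *ᵥ v ⬝ᵥ v = (s * v 0 - t * v 1) ^ 2 := by
  simp only [reactiveMatrix, mulVec, dotProduct, Fin.sum_univ_two, cons_val', cons_val_zero,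
    cons_val_one, empty_val', cons_val_fin_one, of_apply]
  ring

theorem isGreatest_mulVec_dotProduct (hst : s ≠ 0 ∨ t ≠ 0) :
    IsGreatest {x : ℝ | ∃ v : Fin 2 → ℝ, v 0 ^ 2 + v 1 ^ 2 = 1 ∧
      x = reactiveMatrix ρ s t *ᵥ v ⬝ᵥ v} ρ := by
  have hpos : 0 < s ^ 2 + t ^ 2 := by
    rcases hst with h | h <;> nlinarith [sq_pos_of_ne_zero h, sq_nonneg s, sq_nonneg t]
  set u := √(s ^ 2 + t ^ 2)
  have hu : u ^ 2 = s ^ 2 + t ^ 2 := sq_sqrt hpos.le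
  have hu0 : u ≠ 0 := (sqrt_pos.2 hpos).ne'
  constructor
  · let v : Fin 2 → ℝ := ![t / u, s / u]
    have hv : v 0 ^ 2 + v 1 ^ 2 = 1 := by
      simp only [v, cons_val_zero, cons_val_one, div_pow, ← add_div, hu]
      field_simp
      ring
    refine ⟨v, hv, ?_⟩
    have hv_ker : s * v 0 - t * v 1 = 0 := by
      simp only [v, cons_val_zero, cons_val_one]
      ring
    have hgap := sub_mulVec_dotProduct ρ s t v
    rw [hv, hv_ker] at hgap
    linarith
  · rintro x ⟨v, hv, rfl⟩
    have hgap := sub_mulVec_dotProduct ρ s t v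
    rw [hv] at hgap
    linarith [sq_nonneg (s * v 0 - t * v 1)]

end reactiveMatrix

theorem stmt_15 (lam1 lam2 ρ : ℝ) (hle : lam2 ≤ lam1) (hneg : lam1 < 0) (hρ : 0 < ρ) :
    ∃ A : Matrix (Fin 2) (Fin 2) ℝ,
      A.trace = lam1 + lam2 ∧ A.det = lam1 * lam2 ∧
      IsGreatest {x : ℝ | ∃ v : Fin 2 → ℝ, v 0 ^ 2 + v 1 ^ 2 = 1 ∧ x = A.mulVec v ⬝ᵥ v} ρ := by
  have h1 : ρ - √(ρ - lam1) ^ 2 = lam1 := by rw [sq_sqrt (by linarith)]; ring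
  have h2 : ρ - √(ρ - lam2) ^ 2 = lam2 := by rw [sq_sqrt (by linarith)]; ring
  have hs : √(ρ - lam1) ≠ 0 := (sqrt_pos.2 (by linarith)).ne'
  refine ⟨reactiveMatrix ρ √(ρ - lam1) √(ρ - lam2), ?_, ?_,
    reactiveMatrix.isGreatest_mulVec_dotProduct _ _ _ (.inl hs)⟩
  · rw [reactiveMatrix.trace_eq, h1, h2]
  · rw [reactiveMatrix.det_eq, h1, h2]
end

section
/- Let V₁, V₂ ∈ ℝ² be nonzero vectors that are linearly independent (non-parallel) and non-orthogonal (⟨V₁, V₂⟩ ≠ 0), and let ρ > 0. Then there exists a real 2×2 matrix B and real numbers λ₁ < 0 and λ₂ < 0 such that B · V₁ = λ₁ • V₁, B · V₂ = λ₂ • V₂ (so V₁, V₂ are eigenvectors of B with negative eigenvalues, making the origin an attractor), and the supremum over all Euclidean unit vectors v ∈ ℝ² of ⟨B · v, v⟩ equals ρ (i.e. B has reactivity ρ). -/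
open Real Matrix

/-!
For a unit vector `v = (x, y)` one has `⟨B v, v⟩ = tr B / 2 + α (x² - y²) + β (2xy)`, and
`(x² - y², 2xy)` runs over the whole unit circle, so the reactivity of a `2 × 2` matrix is
`tr B / 2 + √(α² + β²)`. For the matrix with eigenpairs `(μ₁, V₁)`, `(μ₂, V₂)`, `μ₁ ≥ μ₂`, this is
`(μ₁ + μ₂)/2 + (μ₁ - μ₂)/2 · N` with `N = 1/|sin ∠(V₁, V₂)|`. Non-orthogonality makes `N > 1`, so
the second term can outweigh the first: `μ₁ = -ρ` and `μ₂ = -ρ (N + 3)/(N - 1)` give reactivity `ρ`.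
-/

lemma mul_sq_sub_sq_add_mul_two_mul_le {α β r x y : ℝ} (hr : 0 ≤ r) (hr2 : r ^ 2 = α ^ 2 + β ^ 2)
    (hxy : x ^ 2 + y ^ 2 = 1) : α * (x ^ 2 - y ^ 2) + β * (2 * x * y) ≤ r := by
  have hunit : (x ^ 2 - y ^ 2) ^ 2 + (2 * x * y) ^ 2 = 1 := by
    linear_combination (x ^ 2 + y ^ 2 + 1) * hxy
  nlinarith [sq_nonneg (α * (2 * x * y) - β * (x ^ 2 - y ^ 2)),
    sq_nonneg (α * (x ^ 2 - y ^ 2) + β * (2 * x * y) + r)]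

lemma exists_mul_sq_sub_sq_add_mul_two_mul_eq {α β r : ℝ} (hr : 0 ≤ r)
    (hr2 : r ^ 2 = α ^ 2 + β ^ 2) :
    ∃ x y : ℝ, x ^ 2 + y ^ 2 = 1 ∧ α * (x ^ 2 - y ^ 2) + β * (2 * x * y) = r := by
  rcases (show 0 ≤ r + α by nlinarith [sq_nonneg β]).eq_or_lt with hα | hα
  · exact ⟨0, 1, by norm_num, by linarith⟩
  · -- `(x, y)` is the half-angle direction of `(α, β)`
    obtain ⟨L, hL2, hL⟩ : ∃ L : ℝ, L ^ 2 = 2 * r * (r + α) ∧ L ≠ 0 :=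
      ⟨√(2 * r * (r + α)), sq_sqrt (by positivity), by rw [sqrt_ne_zero']; nlinarith [sq_nonneg β]⟩
    refine ⟨(r + α) / L, β / L, ?_, ?_⟩
    · field_simp
      linear_combination -hL2 - hr2
    · field_simp
      linear_combination -r * hL2 - (2 * r + α) * hr2

lemma mulVec_dotProduct_fin_two (B : Matrix (Fin 2) (Fin 2) ℝ) (v : Fin 2 → ℝ) :
    B *ᵥ v ⬝ᵥ v = B.trace / 2 * (v 0 ^ 2 + v 1 ^ 2) + (B 0 0 - B 1 1) / 2 * (v 0 ^ 2 - v 1 ^ 2)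
      + (B 0 1 + B 1 0) / 2 * (2 * v 0 * v 1) := by
  simp only [mulVec, dotProduct, Fin.sum_univ_two, trace_fin_two]
  ring

theorem isGreatest_mulVec_dotProduct_fin_two (B : Matrix (Fin 2) (Fin 2) ℝ) {r : ℝ} (hr : 0 ≤ r)
    (hr2 : r ^ 2 = ((B 0 0 - B 1 1) / 2) ^ 2 + ((B 0 1 + B 1 0) / 2) ^ 2) :
    IsGreatest {x : ℝ | ∃ v : Fin 2 → ℝ, v 0 ^ 2 + v 1 ^ 2 = 1 ∧ x = B *ᵥ v ⬝ᵥ v}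
      (B.trace / 2 + r) := by
  constructor
  · obtain ⟨x, y, hxy, hmax⟩ := exists_mul_sq_sub_sq_add_mul_two_mul_eq hr hr2
    refine ⟨![x, y], hxy, ?_⟩
    simp only [mulVec_dotProduct_fin_two, cons_val_zero, cons_val_one]
    linear_combination -(B.trace / 2 * hxy) - hmax
  · rintro _ ⟨v, hv, rfl⟩
    rw [mulVec_dotProduct_fin_two, hv]
    linarith [mul_sq_sub_sq_add_mul_two_mul_le hr hr2 hv]

lemma det_ne_zero_of_linearIndependent {V₁ V₂ : Fin 2 → ℝ} (h : LinearIndependent ℝ ![V₁, V₂]) :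
    V₁ 0 * V₂ 1 - V₁ 1 * V₂ 0 ≠ 0 := by
  have hunit : IsUnit (of ![V₁, V₂]) := linearIndependent_rows_iff_isUnit.mp h
  simpa [isUnit_iff_isUnit_det, det_fin_two] using hunit

/-- `P diag(μ₁, μ₂) P⁻¹` for the matrix `P` with columns `V₁, V₂`. -/
noncomputable def withEigenpairs (V₁ V₂ : Fin 2 → ℝ) (μ₁ μ₂ : ℝ) : Matrix (Fin 2) (Fin 2) ℝ :=
  (V₁ 0 * V₂ 1 - V₁ 1 * V₂ 0)⁻¹ •
    !![μ₁ * V₁ 0 * V₂ 1 - μ₂ * V₂ 0 * V₁ 1, (μ₂ - μ₁) * V₁ 0 * V₂ 0;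
       (μ₁ - μ₂) * V₁ 1 * V₂ 1, μ₂ * V₂ 1 * V₁ 0 - μ₁ * V₁ 1 * V₂ 0]

section withEigenpairs

variable {V₁ V₂ : Fin 2 → ℝ} (hd : V₁ 0 * V₂ 1 - V₁ 1 * V₂ 0 ≠ 0) (μ₁ μ₂ : ℝ)
include hd

lemma withEigenpairs_mulVec_left : withEigenpairs V₁ V₂ μ₁ μ₂ *ᵥ V₁ = μ₁ • V₁ := by
  ext i; fin_cases i <;>
  · simp only [withEigenpairs, mulVec, dotProduct, Fin.sum_univ_two, Fin.zero_eta, Fin.mk_one,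
      Matrix.smul_apply, Pi.smul_apply, of_apply, cons_val', cons_val_zero, cons_val_one,
      cons_val_fin_one, smul_eq_mul]
    field_simp
    ring

lemma withEigenpairs_mulVec_right : withEigenpairs V₁ V₂ μ₁ μ₂ *ᵥ V₂ = μ₂ • V₂ := by
  ext i; fin_cases i <;>
  · simp only [withEigenpairs, mulVec, dotProduct, Fin.sum_univ_two, Fin.zero_eta, Fin.mk_one,
      Matrix.smul_apply, Pi.smul_apply, of_apply, cons_val', cons_val_zero, cons_val_one,
      cons_val_fin_one, smul_eq_mul]
    field_simp
    ring

lemma trace_withEigenpairs : (withEigenpairs V₁ V₂ μ₁ μ₂).trace = μ₁ + μ₂ := by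
  simp only [withEigenpairs, trace_fin_two, Matrix.smul_apply, of_apply, cons_val', cons_val_zero,
    cons_val_one, cons_val_fin_one, smul_eq_mul]
  field_simp
  ring

/-- `(V₁ ⬝ᵥ V₂) / det` is the cotangent of the angle between `V₁` and `V₂`. -/
lemma withEigenpairs_offDiag_sq :
    letI B := withEigenpairs V₁ V₂ μ₁ μ₂
    ((B 0 0 - B 1 1) / 2) ^ 2 + ((B 0 1 + B 1 0) / 2) ^ 2
      = ((μ₁ - μ₂) / 2) ^ 2 * (1 + ((V₁ ⬝ᵥ V₂) / (V₁ 0 * V₂ 1 - V₁ 1 * V₂ 0)) ^ 2) := by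
  simp only [withEigenpairs, dotProduct, Fin.sum_univ_two, Matrix.smul_apply, of_apply, cons_val',
    cons_val_zero, cons_val_one, cons_val_fin_one, smul_eq_mul]
  field_simp
  ring

end withEigenpairs

theorem stmt_16_general (V₁ V₂ : Fin 2 → ℝ)
    (hind : LinearIndependent ℝ ![V₁, V₂]) (hnonorth : V₁ ⬝ᵥ V₂ ≠ 0)
    (ρ : ℝ) (hρ : 0 < ρ) :
    ∃ (B : Matrix (Fin 2) (Fin 2) ℝ) (lam1 lam2 : ℝ), lam1 < 0 ∧ lam2 < 0 ∧
      B.mulVec V₁ = lam1 • V₁ ∧ B.mulVec V₂ = lam2 • V₂ ∧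
      IsGreatest {x : ℝ | ∃ v : Fin 2 → ℝ, v 0 ^ 2 + v 1 ^ 2 = 1 ∧ x = B.mulVec v ⬝ᵥ v} ρ := by
  have hd := det_ne_zero_of_linearIndependent hind
  set N := √(1 + ((V₁ ⬝ᵥ V₂) / (V₁ 0 * V₂ 1 - V₁ 1 * V₂ 0)) ^ 2)
  have hN2 : N ^ 2 = 1 + ((V₁ ⬝ᵥ V₂) / (V₁ 0 * V₂ 1 - V₁ 1 * V₂ 0)) ^ 2 :=
    sq_sqrt (add_nonneg zero_le_one (sq_nonneg _))
  have hN : 1 < N := (lt_sqrt zero_le_one).mpr <| by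
    simpa using sq_pos_of_ne_zero (div_ne_zero hnonorth hd)
  have hN1 : N - 1 ≠ 0 := by linarith
  set μ₂ := -ρ * (N + 3) / (N - 1) with hμ₂_def
  have hμ₂ : μ₂ < -ρ := by
    rw [hμ₂_def, div_lt_iff₀ (by linarith)]
    linarith
  refine ⟨withEigenpairs V₁ V₂ (-ρ) μ₂, -ρ, μ₂, by linarith, by linarith,
    withEigenpairs_mulVec_left hd _ _, withEigenpairs_mulVec_right hd _ _, ?_⟩
  have hr2 := withEigenpairs_offDiag_sq hd (-ρ) μ₂
  rw [← hN2, ← mul_pow] at hr2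
  convert isGreatest_mulVec_dotProduct_fin_two _
    (mul_nonneg (by linarith) (by linarith)) hr2.symm using 1
  rw [trace_withEigenpairs hd, hμ₂_def]
  field_simp
  ring

theorem stmt_16 (V₁ V₂ : Fin 2 → ℝ) (h1 : V₁ ≠ 0) (h2 : V₂ ≠ 0)
    (hind : LinearIndependent ℝ ![V₁, V₂]) (hnonorth : V₁ ⬝ᵥ V₂ ≠ 0)
    (ρ : ℝ) (hρ : 0 < ρ) :
    ∃ (B : Matrix (Fin 2) (Fin 2) ℝ) (lam1 lam2 : ℝ), lam1 < 0 ∧ lam2 < 0 ∧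
      B.mulVec V₁ = lam1 • V₁ ∧ B.mulVec V₂ = lam2 • V₂ ∧
      IsGreatest {x : ℝ | ∃ v : Fin 2 → ℝ, v 0 ^ 2 + v 1 ^ 2 = 1 ∧ x = B.mulVec v ⬝ᵥ v} ρ :=
  stmt_16_general V₁ V₂ hind hnonorth ρ hρ
end

section
/- Let A = !![a, b; c, d] be a real 2×2 matrix such that trace(A) < 0 and det(A) > 0 (so the origin is an attractor of X' = AX), and suppose m_R + p > 0 (the system is reactive). Then m_R < 0 < p, and for every t ≥ 0 and every nonzero X₀ ∈ ℝ², the solution of X' = AX with X(0) = X₀ satisfies ‖exp(t·A) · X₀‖ < (p/(−m_R))·‖X₀‖, where exp is the matrix exponential and ‖·‖ is the Euclidean norm on ℝ². That is, the maximal amplification ρ_max of a reactive attractor is bounded above by −p/m_R = 1/cos(2·δ_R). -/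
/-!
Write `A = m_R • 1 + C` with `C` traceless, so that `C * C = q • 1` with
`q = m_R ^ 2 - det A < m_R ^ 2`. Then `exp (t • C) = F • 1 + u • C` where `F ^ 2 - q u ^ 2 = 1`
(`F = cosh (√q t)`, `u = sinh (√q t) / √q`, or `cos`, `sin` when `q < 0`). Splitting `C` into its
symmetric part `S`, which scales lengths by `p`, and a rotation part, `F • 1 + u • (C - S)` is a
similarity of ratio `√(1 + p²u²)`, so `‖exp (t • C)‖ ≤ √(1 + p²u²) + p |u|`. With `σ = -m_R` we
have `|u| ≤ sinh (σ t) / σ`, and since `p > σ` this is `< (p / σ) e^{σ t}`; the factor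
`e^{-σ t}` coming from `m_R • 1` cancels the exponential.
-/

open Real Matrix
open scoped Nat

theorem summable_pow_div_factorial_of_le {f : ℕ → ℕ} (hf : ∀ n, n ≤ f n) (r : ℝ) :
    Summable fun n ↦ r ^ n / (f n)! := by
  refine (Real.summable_pow_div_factorial |r|).of_norm_bounded fun n ↦ ?_
  rw [norm_div, norm_pow, Real.norm_eq_abs, RCLike.norm_natCast]
  gcongr
  exact hf n

namespace ExpSeries

/-- `evenSeries r = cosh √r` and `oddSeries r = sinh √r / √r` for `r > 0`, and `cos √-r`,
`sin √-r / √-r` for `r < 0`. -/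
noncomputable def evenSeries (r : ℝ) : ℝ := ∑' n : ℕ, r ^ n / (2 * n)!

noncomputable def oddSeries (r : ℝ) : ℝ := ∑' n : ℕ, r ^ n / (2 * n + 1)!

theorem hasSum_evenSeries (r : ℝ) : HasSum (fun n : ℕ ↦ r ^ n / (2 * n)!) (evenSeries r) :=
  (summable_pow_div_factorial_of_le (fun n ↦ by omega) r).hasSum

theorem hasSum_oddSeries (r : ℝ) : HasSum (fun n : ℕ ↦ r ^ n / (2 * n + 1)!) (oddSeries r) :=
  (summable_pow_div_factorial_of_le (fun n ↦ by omega) r).hasSum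

theorem evenSeries_sq (x : ℝ) : evenSeries (x ^ 2) = cosh x := by
  rw [evenSeries, ← (hasSum_cosh x).tsum_eq]
  simp only [← pow_mul]

theorem mul_oddSeries_sq (x : ℝ) : x * oddSeries (x ^ 2) = sinh x := by
  rw [oddSeries, ← tsum_mul_left, ← (hasSum_sinh x).tsum_eq]
  exact tsum_congr fun n ↦ by ring

theorem evenSeries_neg_sq (x : ℝ) : evenSeries (-x ^ 2) = cos x := by
  rw [evenSeries, ← (hasSum_cos x).tsum_eq]
  exact tsum_congr fun n ↦ by rw [neg_pow, ← pow_mul]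

theorem mul_oddSeries_neg_sq (x : ℝ) : x * oddSeries (-x ^ 2) = sin x := by
  rw [oddSeries, ← tsum_mul_left, ← (hasSum_sin x).tsum_eq]
  exact tsum_congr fun n ↦ by rw [neg_pow]; ring

theorem evenSeries_sq_sub_mul_oddSeries_sq (r : ℝ) :
    evenSeries r ^ 2 - r * oddSeries r ^ 2 = 1 := by
  rcases le_total 0 r with hr | hr
  · obtain ⟨x, rfl⟩ : ∃ x, r = x ^ 2 := ⟨√r, (sq_sqrt hr).symm⟩
    rw [← cosh_sq_sub_sinh_sq x, evenSeries_sq, ← mul_oddSeries_sq]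
    ring
  · obtain ⟨x, rfl⟩ : ∃ x, r = -x ^ 2 := ⟨√(-r), by rw [sq_sqrt (neg_nonneg.2 hr), neg_neg]⟩
    rw [← cos_sq_add_sin_sq x, evenSeries_neg_sq, ← mul_oddSeries_neg_sq]
    ring

theorem oddSeries_mono {r s : ℝ} (hr : 0 ≤ r) (hrs : r ≤ s) : oddSeries r ≤ oddSeries s :=
  hasSum_le (fun n ↦ by gcongr) (hasSum_oddSeries r) (hasSum_oddSeries s)

theorem one_le_oddSeries {s : ℝ} (hs : 0 ≤ s) : 1 ≤ oddSeries s := by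
  simpa using le_hasSum (hasSum_oddSeries s) 0 fun n _ ↦ by positivity

theorem abs_oddSeries_le_one {r : ℝ} (hr : r < 0) : |oddSeries r| ≤ 1 := by
  obtain ⟨x, hx, rfl⟩ : ∃ x, 0 < x ∧ r = -x ^ 2 :=
    ⟨√(-r), sqrt_pos.2 (neg_pos.2 hr), by rw [sq_sqrt (neg_nonneg.2 hr.le), neg_neg]⟩
  have h := abs_sin_le_abs (x := x)
  rw [← mul_oddSeries_neg_sq, abs_mul, abs_of_pos hx] at h
  exact le_of_mul_le_mul_left (by simpa using h) hx

theorem abs_oddSeries_le {r s : ℝ} (hrs : r ≤ s) (hs : 0 ≤ s) : |oddSeries r| ≤ oddSeries s := by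
  rcases lt_or_ge r 0 with hr | hr
  · exact (abs_oddSeries_le_one hr).trans (one_le_oddSeries hs)
  · rw [abs_of_nonneg (zero_le_one.trans (one_le_oddSeries hr))]
    exact oddSeries_mono hr hrs

theorem mul_abs_mul_oddSeries_le_sinh {q σ t : ℝ} (hσ : 0 ≤ σ) (ht : 0 ≤ t) (hq : q ≤ σ ^ 2) :
    σ * |t * oddSeries (q * t ^ 2)| ≤ sinh (σ * t) := by
  rw [← mul_oddSeries_sq, abs_mul, abs_of_nonneg ht, ← mul_assoc, mul_pow]
  gcongr
  exact abs_oddSeries_le (by gcongr) (by positivity)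

theorem exp_eq_of_mul_self_eq_smul_one {𝔸 : Type*} [Ring 𝔸] [Algebra ℝ 𝔸] [TopologicalSpace 𝔸]
    [IsTopologicalRing 𝔸] [ContinuousSMul ℝ 𝔸] [T2Space 𝔸] {M : 𝔸} {r : ℝ}
    (hM : M * M = r • 1) :
    NormedSpace.exp M = evenSeries r • 1 + oddSeries r • M := by
  have hpow_even (n : ℕ) : M ^ (2 * n) = r ^ n • 1 := by
    rw [pow_mul, sq, hM, smul_pow, one_pow]
  rw [NormedSpace.exp_eq_tsum ℝ]
  refine HasSum.tsum_eq (.even_add_odd ?_ ?_)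
  · convert (hasSum_evenSeries r).smul_const (1 : 𝔸) using 2 with n
    rw [hpow_even, smul_smul, inv_mul_eq_div]
  · convert (hasSum_oddSeries r).smul_const M using 2 with n
    rw [pow_succ, hpow_even, smul_one_mul, smul_smul, inv_mul_eq_div]

theorem exp_smul_one {𝔸 : Type*} [Ring 𝔸] [Algebra ℝ 𝔸] [TopologicalSpace 𝔸]
    [IsTopologicalRing 𝔸] [ContinuousSMul ℝ 𝔸] [T2Space 𝔸] (x : ℝ) :
    NormedSpace.exp (x • (1 : 𝔸)) = Real.exp x • 1 := by
  rw [exp_eq_of_mul_self_eq_smul_one (r := x ^ 2) (by rw [smul_one_mul, smul_smul, sq]),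
    evenSeries_sq, smul_smul, mul_comm, mul_oddSeries_sq, ← add_smul, cosh_add_sinh]

theorem exp_smul_smul_one_add {n : Type*} [Fintype n] [DecidableEq n] {C : Matrix n n ℝ} {q : ℝ}
    (hC : C * C = q • 1) (m t : ℝ) :
    NormedSpace.exp (t • (m • 1 + C)) =
      Real.exp (t * m) • (evenSeries (q * t ^ 2) • 1 + (t * oddSeries (q * t ^ 2)) • C) := by
  have htC : (t • C) * (t • C) = (q * t ^ 2) • 1 := by
    rw [smul_mul_smul_comm, hC, smul_smul]; ring_nf
  rw [smul_add, smul_smul, exp_add_of_commute _ _ ((Commute.one_left _).smul_left _ |>.smul_right _),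
    exp_smul_one, exp_eq_of_mul_self_eq_smul_one htC, smul_mul_assoc, one_mul, smul_smul,
    mul_comm (oddSeries _) t]

end ExpSeries

theorem norm_sq_toLp_eq_dotProduct {n : Type*} [Fintype n] (v : n → ℝ) :
    ‖WithLp.toLp 2 v‖ ^ 2 = v ⬝ᵥ v := by
  rw [EuclideanSpace.norm_sq_eq]
  simp [dotProduct, sq]

theorem sqrt_sq_add_sq_eq_norm_toLp (v : Fin 2 → ℝ) :
    √(v 0 ^ 2 + v 1 ^ 2) = ‖WithLp.toLp 2 v‖ := by
  simp [EuclideanSpace.norm_eq, Fin.sum_univ_two]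

theorem norm_toLp_mulVec_of_transpose_mul_self {n : Type*} [Fintype n] [DecidableEq n]
    {M : Matrix n n ℝ} {s : ℝ} (hM : Mᵀ * M = s • 1) (v : n → ℝ) :
    ‖WithLp.toLp 2 (M *ᵥ v)‖ = √s * ‖WithLp.toLp 2 v‖ := by
  have h : ‖WithLp.toLp 2 (M *ᵥ v)‖ ^ 2 = s * ‖WithLp.toLp 2 v‖ ^ 2 := by
    rw [norm_sq_toLp_eq_dotProduct, norm_sq_toLp_eq_dotProduct, dotProduct_mulVec,
      ← vecMul_transpose, vecMul_vecMul, ← dotProduct_mulVec, hM]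
    simp [smul_mulVec, dotProduct_smul]
  rw [← sqrt_sq (norm_nonneg _), h, sqrt_mul' _ (sq_nonneg _), sqrt_sq (norm_nonneg _)]

theorem norm_toLp_mulVec_smul_one_add_smul_le {e b c F u p : ℝ}
    (hF : F ^ 2 - (e ^ 2 + b * c) * u ^ 2 = 1) (hp : p = √(e ^ 2 + ((b + c) / 2) ^ 2))
    (v : Fin 2 → ℝ) :
    ‖WithLp.toLp 2 ((F • 1 + u • !![e, b; c, -e]) *ᵥ v)‖ ≤
      (√(1 + p ^ 2 * u ^ 2) + p * |u|) * ‖WithLp.toLp 2 v‖ := by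
  set f := (b + c) / 2
  set ω := (c - b) / 2
  set N : Matrix (Fin 2) (Fin 2) ℝ := !![F, -(u * ω); u * ω, F]
  set S : Matrix (Fin 2) (Fin 2) ℝ := !![e, f; f, -e]
  have hsplit : F • 1 + u • !![e, b; c, -e] = N + u • S := by
    ext i j; fin_cases i <;> fin_cases j <;> simp [N, S, f, ω] <;> ring
  have hp2 : p ^ 2 = e ^ 2 + f ^ 2 := by rw [hp, sq_sqrt (by positivity)]
  have hN : Nᵀ * N = (1 + p ^ 2 * u ^ 2) • 1 := by
    rw [hp2, ← hF, Matrix.one_fin_two]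
    ext i j; fin_cases i <;> fin_cases j <;> simp [N, f, ω, Matrix.mul_apply] <;> ring
  have hS : Sᵀ * S = p ^ 2 • 1 := by
    rw [hp2, Matrix.one_fin_two]
    ext i j; fin_cases i <;> fin_cases j <;> simp [S, Matrix.mul_apply] <;> ring
  rw [hsplit]
  calc ‖WithLp.toLp 2 ((N + u • S) *ᵥ v)‖
      = ‖WithLp.toLp 2 (N *ᵥ v) + u • WithLp.toLp 2 (S *ᵥ v)‖ := by
        rw [add_mulVec, smul_mulVec, WithLp.toLp_add, WithLp.toLp_smul]
    _ ≤ ‖WithLp.toLp 2 (N *ᵥ v)‖ + |u| * ‖WithLp.toLp 2 (S *ᵥ v)‖ := by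
        grw [norm_add_le, norm_smul, Real.norm_eq_abs]
    _ = (√(1 + p ^ 2 * u ^ 2) + p * |u|) * ‖WithLp.toLp 2 v‖ := by
        rw [norm_toLp_mulVec_of_transpose_mul_self hN, norm_toLp_mulVec_of_transpose_mul_self hS,
          sqrt_sq (hp ▸ sqrt_nonneg _)]
        ring

theorem exp_neg_mul_mul_lt {σ p t u : ℝ} (hσ : 0 < σ) (hσp : σ < p)
    (hu : σ * |u| ≤ sinh (σ * t)) :
    Real.exp (-(σ * t)) * (√(1 + p ^ 2 * u ^ 2) + p * |u|) < p / σ := by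
  set k := p / σ
  have hk : 1 < k := (one_lt_div hσ).2 hσp
  have hpk : p = k * σ := (div_mul_cancel₀ p hσ.ne').symm
  have hlin : p * |u| ≤ k * sinh (σ * t) := by
    rw [hpk, mul_assoc]; gcongr
  have hsqrt : √(1 + p ^ 2 * u ^ 2) < k * cosh (σ * t) := by
    rw [sqrt_lt' (by positivity), mul_pow, cosh_sq]
    have : p ^ 2 * u ^ 2 ≤ k ^ 2 * sinh (σ * t) ^ 2 := by
      rw [← sq_abs u, ← mul_pow, ← mul_pow]
      exact pow_le_pow_left₀ (mul_nonneg (hσ.trans hσp).le (abs_nonneg u)) hlin 2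
    nlinarith
  calc Real.exp (-(σ * t)) * (√(1 + p ^ 2 * u ^ 2) + p * |u|)
      < Real.exp (-(σ * t)) * (k * (cosh (σ * t) + sinh (σ * t))) := by gcongr; linarith
    _ = k := by
        rw [cosh_add_sinh, mul_left_comm, ← Real.exp_add, neg_add_cancel, Real.exp_zero, mul_one]

open ExpSeries in
theorem stmt_17 (a b c d : ℝ) (A : Matrix (Fin 2) (Fin 2) ℝ) (hA : A = !![a, b; c, d])
    (mR p : ℝ) (hmR : mR = (a + d) / 2)
    (hp : p = (1 / 2) * Real.sqrt ((a - d) ^ 2 + (b + c) ^ 2))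
    (htr : A.trace < 0) (hdet : 0 < A.det) (hreac : 0 < mR + p) :
    mR < 0 ∧ 0 < p ∧
    ∀ t : ℝ, 0 ≤ t → ∀ X₀ : Fin 2 → ℝ, X₀ ≠ 0 →
      Real.sqrt (((NormedSpace.exp (t • A)).mulVec X₀ 0) ^ 2 +
          ((NormedSpace.exp (t • A)).mulVec X₀ 1) ^ 2) <
        (p / (-mR)) * Real.sqrt ((X₀ 0) ^ 2 + (X₀ 1) ^ 2) := by
  rw [hA, trace_fin_two_of] at htr
  rw [hA, det_fin_two_of] at hdet
  have hmR0 : mR < 0 := by linarith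
  refine ⟨hmR0, by linarith, fun t ht X₀ hX₀ ↦ ?_⟩
  set e := (a - d) / 2
  set q := e ^ 2 + b * c
  have hq : q < (-mR) ^ 2 := by
    have hdet_eq : (-mR) ^ 2 - q = a * d - b * c := by simp only [q, e, hmR]; ring
    linarith
  have hp' : p = √(e ^ 2 + ((b + c) / 2) ^ 2) := by
    rw [hp, show e ^ 2 + ((b + c) / 2) ^ 2 = (1 / 2) ^ 2 * ((a - d) ^ 2 + (b + c) ^ 2) by ring,
      sqrt_mul (by positivity), sqrt_sq (by norm_num)]
  have hAsplit : A = mR • 1 + !![e, b; c, -e] := by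
    rw [hA, hmR]; ext i j; fin_cases i <;> fin_cases j <;> simp [e] <;> ring
  have hC : !![e, b; c, -e] * !![e, b; c, -e] = q • 1 := by
    ext i j; fin_cases i <;> fin_cases j <;> simp [q, Matrix.mul_apply] <;> ring
  set F := evenSeries (q * t ^ 2)
  set u := t * oddSeries (q * t ^ 2)
  have hFu : F ^ 2 - q * u ^ 2 = 1 := by
    linear_combination evenSeries_sq_sub_mul_oddSeries_sq (q * t ^ 2)
  have hu : -mR * |u| ≤ sinh (-mR * t) := mul_abs_mul_oddSeries_le_sinh (by linarith) ht hq.le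
  have hx : 0 < ‖WithLp.toLp 2 X₀‖ := norm_pos_iff.2 (by simpa using hX₀)
  rw [sqrt_sq_add_sq_eq_norm_toLp, sqrt_sq_add_sq_eq_norm_toLp, hAsplit, exp_smul_smul_one_add hC,
    smul_mulVec, WithLp.toLp_smul, norm_smul, Real.norm_of_nonneg (Real.exp_pos _).le]
  calc Real.exp (t * mR) * ‖WithLp.toLp 2 ((F • 1 + u • !![e, b; c, -e]) *ᵥ X₀)‖
      ≤ Real.exp (t * mR) * ((√(1 + p ^ 2 * u ^ 2) + p * |u|) * ‖WithLp.toLp 2 X₀‖) := by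
        gcongr; exact norm_toLp_mulVec_smul_one_add_smul_le hFu hp' X₀
    _ = Real.exp (-(-mR * t)) * (√(1 + p ^ 2 * u ^ 2) + p * |u|) * ‖WithLp.toLp 2 X₀‖ := by
        ring_nf
    _ < p / -mR * ‖WithLp.toLp 2 X₀‖ := by
        gcongr; exact exp_neg_mul_mul_lt (by linarith) (by linarith) hu
end

section
/- Let A = !![a, b; c, d] be a real 2×2 matrix such that trace(A) < 0 and det(A) > 0 (so the origin is an attractor), m_R + p > 0 (the system is reactive), and p > |m_T| (so A has two distinct real eigenvalues). Let p_R = √(p² − m_T²) > 0. Then for every t ≥ 0 and every nonzero X₀ ∈ ℝ², ‖exp(t·A) · X₀‖ < (p/p_R)·‖X₀‖, where exp is the matrix exponential and ‖·‖ is the Euclidean norm on ℝ². That is, for a reactive attractor with real eigenvalues and eigenvector separation radius δ_T, the maximal amplification is bounded above by 1/sin(2·δ_T) = p/p_R. -/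
/-!
With `r = pR`, the matrix `A` has the two real eigenvalues `mR ± r` and splits as
`A = (mR + r) P + (mR - r) (1 - P)` with `P` the spectral projection onto the first eigenline.
Hence `exp (t A) = u P + v (1 - P)` with `u = e^{t (mR + r)}`, `v = e^{t (mR - r)}`, and for
`t ≥ 0` the attractor condition gives `0 < v ≤ u ≤ 1`. The Frobenius norm of `P` is exactly
`p / r > 1` (reactivity makes `r < p`), so `‖exp (t A) x‖ ≤ (u - v) ‖P x‖ + v ‖x‖` stays strictly
below `(p / r) ‖x‖`.
-/

open Real Matrix

section BanachAlgebra

variable {𝔸 : Type*} [NormedRing 𝔸] [NormedAlgebra ℝ 𝔸] [CompleteSpace 𝔸]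

theorem IsIdempotentElem.exp_smul {P : 𝔸} (hP : IsIdempotentElem P) (s : ℝ) :
    NormedSpace.exp (s • P) = Real.exp s • P + (1 - P) := by
  have hseries : HasSum (fun n : ℕ => ((n.factorial : ℝ)⁻¹ * s ^ n) • P) (Real.exp s • P) := by
    rw [Real.exp_eq_exp_ℝ]
    exact (NormedSpace.exp_series_hasSum_exp' (𝕂 := ℝ) s).smul_const P
  -- since `P ^ n = P` for `n ≥ 1`, the two series differ only in their constant terms
  have hdiff : HasSum (fun n : ℕ => ((n.factorial : ℝ)⁻¹ • (s • P) ^ n)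
      - ((n.factorial : ℝ)⁻¹ * s ^ n) • P) (1 - P) := by
    convert hasSum_ite_eq 0 (1 - P) using 1
    funext n
    cases n with
    | zero => simp
    | succ n => simp [smul_pow, hP.pow_succ_eq, smul_smul]
  exact (NormedSpace.exp_series_hasSum_exp' (𝕂 := ℝ) (s • P)).unique
    (by simpa using hseries.add hdiff)

theorem IsIdempotentElem.exp_smul_add_smul_one_sub {P : 𝔸} (hP : IsIdempotentElem P)
    (x y : ℝ) :
    NormedSpace.exp (x • P + y • (1 - P)) = Real.exp x • P + Real.exp y • (1 - P) := by
  let +nondep : NormedAlgebra ℚ 𝔸 := NormedAlgebra.restrictScalars ℚ ℝ 𝔸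
  have hcomm : Commute (x • P) (y • (1 - P)) :=
    (((Commute.one_right P).sub_right (Commute.refl P)).smul_right y).smul_left x
  rw [NormedSpace.exp_add_of_commute hcomm, hP.exp_smul, hP.one_sub.exp_smul, sub_sub_cancel]
  simp only [add_mul, mul_add, smul_mul_assoc, mul_smul_comm, hP.mul_one_sub_self,
    hP.one_sub_mul_self, hP.eq, hP.one_sub.eq, smul_zero]
  module

end BanachAlgebra

-- `exp` does not depend on the norm, so any Banach algebra norm on matrices will do.
theorem Matrix.exp_smul_add_smul_one_sub {n : Type*} [Fintype n] [DecidableEq n]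
    {P : Matrix n n ℝ} (hP : IsIdempotentElem P) (x y : ℝ) :
    NormedSpace.exp (x • P + y • (1 - P)) = Real.exp x • P + Real.exp y • (1 - P) :=
  open scoped Matrix.Norms.L2Operator in hP.exp_smul_add_smul_one_sub x y

open scoped Matrix.Norms.Frobenius in
theorem Matrix.norm_toLp_mulVec_le_frobenius {m n : Type*} [Fintype m] [Fintype n]
    (M : Matrix m n ℝ) (x : n → ℝ) :
    ‖WithLp.toLp 2 (M *ᵥ x)‖ ≤ ‖M‖ * ‖WithLp.toLp 2 x‖ := by
  rw [← frobenius_norm_replicateCol (ι := Unit), ← frobenius_norm_replicateCol (ι := Unit),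
    replicateCol_mulVec]
  exact frobenius_norm_mul _ _

theorem EuclideanSpace.norm_toLp_fin_two (x : Fin 2 → ℝ) :
    ‖WithLp.toLp 2 x‖ = √(x 0 ^ 2 + x 1 ^ 2) := by
  simp [EuclideanSpace.norm_eq, Fin.sum_univ_two]

theorem norm_smul_add_smul_sub_lt {E : Type*} [SeminormedAddCommGroup E] [NormedSpace ℝ E]
    {x y : E} {κ u v : ℝ} (hy : ‖y‖ ≤ κ * ‖x‖) (hκ : 1 < κ) (hx : 0 < ‖x‖) (hv : 0 < v)
    (hvu : v ≤ u) (hu : u ≤ 1) :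
    ‖u • y + v • (x - y)‖ < κ * ‖x‖ :=
  calc ‖u • y + v • (x - y)‖ = ‖(u - v) • y + v • x‖ := by congr 1; module
    _ ≤ (u - v) * ‖y‖ + v * ‖x‖ := by
      refine (norm_add_le _ _).trans_eq ?_
      rw [norm_smul_of_nonneg (sub_nonneg.2 hvu), norm_smul_of_nonneg hv.le]
    _ ≤ (u - v) * (κ * ‖x‖) + v * ‖x‖ := by gcongr
    _ < κ * ‖x‖ := by
      nlinarith [mul_pos hv (mul_pos hx (sub_pos.2 hκ)),
        mul_nonneg (sub_nonneg.2 hu) (mul_pos (zero_lt_one.trans hκ) hx).le]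

/-- The spectral projection of `!![a, b; c, d]` onto the eigenline of `(a + d) / 2 + r`, along
the eigenline of `(a + d) / 2 - r`, where `r ^ 2 = ((a - d) / 2) ^ 2 + b * c`. -/
noncomputable def eigenProjection (a b c d r : ℝ) : Matrix (Fin 2) (Fin 2) ℝ :=
  (2 * r)⁻¹ • !![r + (a - d) / 2, b; c, r - (a - d) / 2]

section eigenProjection

variable {a b c d r : ℝ}

theorem isIdempotentElem_eigenProjection (hr : r ≠ 0)
    (hdisc : r ^ 2 = ((a - d) / 2) ^ 2 + b * c) :
    IsIdempotentElem (eigenProjection a b c d r) := by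
  unfold IsIdempotentElem eigenProjection
  ext i j
  fin_cases i <;> fin_cases j <;> simp [Matrix.mul_apply, Fin.sum_univ_two] <;> field_simp
  · linear_combination (-4) * hdisc
  · ring
  · ring
  · linear_combination (-4) * hdisc

theorem eq_smul_eigenProjection_add_smul (hr : r ≠ 0) :
    !![a, b; c, d] = ((a + d) / 2 + r) • eigenProjection a b c d r
      + ((a + d) / 2 - r) • (1 - eigenProjection a b c d r) := by
  unfold eigenProjection
  ext i j
  fin_cases i <;> fin_cases j <;>
    · simp
      field_simp
      ring

theorem exp_smul_eq_eigenProjection (hr : r ≠ 0) (hdisc : r ^ 2 = ((a - d) / 2) ^ 2 + b * c)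
    (t : ℝ) :
    NormedSpace.exp (t • !![a, b; c, d])
      = Real.exp (t * ((a + d) / 2 + r)) • eigenProjection a b c d r
        + Real.exp (t * ((a + d) / 2 - r)) • (1 - eigenProjection a b c d r) := by
  rw [eq_smul_eigenProjection_add_smul hr, smul_add, smul_smul, smul_smul,
    Matrix.exp_smul_add_smul_one_sub (isIdempotentElem_eigenProjection hr hdisc)]

open scoped Matrix.Norms.Frobenius in
theorem frobenius_norm_eigenProjection (hr : 0 < r) {p : ℝ} (hp : 0 ≤ p)
    (hdisc : r ^ 2 = ((a - d) / 2) ^ 2 + b * c) (hpr : p ^ 2 = r ^ 2 + ((c - b) / 2) ^ 2) :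
    ‖eigenProjection a b c d r‖ = p / r := by
  rw [frobenius_norm_def, ← Real.sqrt_eq_rpow, ← Real.sqrt_sq (div_nonneg hp hr.le)]
  congr 1
  simp only [eigenProjection, Fin.sum_univ_two, Matrix.smul_apply, of_apply, cons_val',
    cons_val_zero, cons_val_one, smul_eq_mul, Real.norm_eq_abs, Real.rpow_two, sq_abs]
  field_simp
  linear_combination (-16) * hpr + (-8) * hdisc

open scoped Matrix.Norms.Frobenius in
theorem norm_toLp_eigenProjection_mulVec_le (hr : 0 < r) {p : ℝ} (hp : 0 ≤ p)
    (hdisc : r ^ 2 = ((a - d) / 2) ^ 2 + b * c) (hpr : p ^ 2 = r ^ 2 + ((c - b) / 2) ^ 2)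
    (x : Fin 2 → ℝ) :
    ‖WithLp.toLp 2 (eigenProjection a b c d r *ᵥ x)‖ ≤ p / r * ‖WithLp.toLp 2 x‖ :=
  (norm_toLp_mulVec_le_frobenius _ x).trans_eq <| by
    rw [frobenius_norm_eigenProjection hr hp hdisc hpr]

end eigenProjection

theorem stmt_18 (a b c d : ℝ) (A : Matrix (Fin 2) (Fin 2) ℝ) (hA : A = !![a, b; c, d])
    (mR mT p : ℝ) (hmR : mR = (a + d) / 2) (hmT : mT = (c - b) / 2)
    (hp : p = (1 / 2) * Real.sqrt ((a - d) ^ 2 + (b + c) ^ 2))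
    (htr : A.trace < 0) (hdet : 0 < A.det) (hreac : 0 < mR + p)
    (hreal : p > |mT|) (pR : ℝ) (hpR : pR = Real.sqrt (p ^ 2 - mT ^ 2)) :
    0 < pR ∧
    ∀ t : ℝ, 0 ≤ t → ∀ X₀ : Fin 2 → ℝ, X₀ ≠ 0 →
      Real.sqrt (((NormedSpace.exp (t • A)).mulVec X₀ 0) ^ 2 +
          ((NormedSpace.exp (t • A)).mulVec X₀ 1) ^ 2) <
        (p / pR) * Real.sqrt ((X₀ 0) ^ 2 + (X₀ 1) ^ 2) := by
  have hp0 : 0 ≤ p := (abs_nonneg mT).trans hreal.le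
  have hp2 : p ^ 2 = ((a - d) ^ 2 + (b + c) ^ 2) / 4 := by
    rw [hp, mul_pow, sq_sqrt (by positivity)]; ring
  have hmT2 : mT ^ 2 < p ^ 2 := sq_lt_sq.2 (by rwa [abs_of_nonneg hp0])
  have hpR2 : pR ^ 2 = p ^ 2 - mT ^ 2 := by rw [hpR, sq_sqrt (by linarith)]
  have hpRpos : 0 < pR := by rw [hpR]; exact sqrt_pos.2 (by linarith)
  refine ⟨hpRpos, fun t ht X₀ hX₀ => ?_⟩
  have hdisc : pR ^ 2 = ((a - d) / 2) ^ 2 + b * c := by rw [hpR2, hp2, hmT]; ring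
  have hpr : p ^ 2 = pR ^ 2 + ((c - b) / 2) ^ 2 := by rw [hpR2, hmT]; ring
  rw [hA, trace_fin_two_of] at htr
  rw [hA, det_fin_two_of] at hdet
  have hmRneg : mR < 0 := by rw [hmR]; linarith
  have hgap : pR ^ 2 < mR ^ 2 := by rw [hdisc, hmR]; linarith
  have htop : mR + pR < 0 := by nlinarith
  have hκ : 1 < p / pR := by rw [one_lt_div hpRpos]; linarith
  rw [← EuclideanSpace.norm_toLp_fin_two, ← EuclideanSpace.norm_toLp_fin_two, hA,
    exp_smul_eq_eigenProjection hpRpos.ne' hdisc, ← hmR, add_mulVec, smul_mulVec, smul_mulVec,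
    sub_mulVec, one_mulVec, WithLp.toLp_add, WithLp.toLp_smul, WithLp.toLp_smul, WithLp.toLp_sub]
  exact norm_smul_add_smul_sub_lt (norm_toLp_eigenProjection_mulVec_le hpRpos hp0 hdisc hpr X₀)
    hκ (by simpa using hX₀) (exp_pos _) (exp_le_exp.2 (by gcongr; linarith))
    (exp_le_one_iff.2 (mul_nonpos_of_nonneg_of_nonpos ht htop.le))
end

section
/- Let A = !![a, b; c, d] be a real 2×2 matrix with trace(A) < 0, det(A) > 0 (the origin is an attractor of X' = AX) and m_R + p > 0 (the system is reactive), and let J = !![0, −1; 1, 0]. Set p_T = √(p² − m_R²), which is a positive real number since p > |m_R|. Then for every k ∈ ℝ, the matrix A + k·J has a real eigenvalue λ > 0 if and only if m_T − p_T < −k < m_T + p_T; that is, the co-rotated system Y' = (A + kJ)Y, which governs the nonautonomous system X' = (M_{kt}⁻¹ A M_{kt})X in the rotating frame Y = M_{kt}X, is asymptotically repelling exactly when −k lies strictly between the orthovalues μ₂ = m_T − p_T and μ₁ = m_T + p_T of A. -/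
open Real Matrix

private lemma eig_key (x y z w : ℝ) (htr : x + w < 0) :
    (∃ lam : ℝ, 0 < lam ∧ ∃ V : Fin 2 → ℝ, V ≠ 0 ∧ (!![x, y; z, w]).mulVec V = lam • V) ↔
      x * w - y * z < 0 := by
  constructor
  · rintro ⟨l, hl, V, hV, hE⟩
    have e0 := congrFun hE 0
    have e1 := congrFun hE 1
    simp [Matrix.mulVec, dotProduct, Fin.sum_univ_two] at e0 e1
    have hV01 : V 0 ≠ 0 ∨ V 1 ≠ 0 := by
      by_contra h
      push_neg at h
      exact hV (funext fun i => by fin_cases i <;> simp [h.1, h.2])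
    have hD : (x - l) * (w - l) - y * z = 0 := by
      rcases hV01 with h | h
      · have hD0 : ((x - l) * (w - l) - y * z) * V 0 = 0 := by
          linear_combination (w - l) * e0 - y * e1
        exact (mul_eq_zero.mp hD0).resolve_right h
      · have hD1 : ((x - l) * (w - l) - y * z) * V 1 = 0 := by
          linear_combination (x - l) * e1 - z * e0
        exact (mul_eq_zero.mp hD1).resolve_right h
    nlinarith [mul_pos hl hl]
  · intro hdet
    set s := Real.sqrt ((x + w) ^ 2 - 4 * (x * w - y * z)) with hs_def
    have hdisc : (0:ℝ) < (x + w) ^ 2 - 4 * (x * w - y * z) := by nlinarith [sq_nonneg (x + w)]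
    have hs2 : s ^ 2 = (x + w) ^ 2 - 4 * (x * w - y * z) := Real.sq_sqrt hdisc.le
    have hsnn : 0 ≤ s := Real.sqrt_nonneg _
    have hs_gt : -(x + w) < s := by nlinarith
    set l := ((x + w) + s) / 2 with hl_def
    have hl : 0 < l := by simp only [hl_def]; linarith
    have hchar : (x - l) * (w - l) = y * z := by
      simp only [hl_def]; linear_combination hs2 / 4
    refine ⟨l, hl, ?_⟩
    rcases eq_or_ne y 0 with hy | hy
    · rcases eq_or_ne l x with hlx | hlx
      · rcases eq_or_ne x w with hxw | hxw
        · refine ⟨![0, 1], ?_, ?_⟩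
          · intro h
            simpa using congrFun h 1
          · funext i
            fin_cases i <;>
              simp [Matrix.mulVec, dotProduct, Fin.sum_univ_two, hy, hlx, hxw]
        · refine ⟨![x - w, z], ?_, ?_⟩
          · intro h
            exact hxw (by have := congrFun h 0; simp at this; linarith)
          · funext i
            fin_cases i <;>
              simp [Matrix.mulVec, dotProduct, Fin.sum_univ_two, hy, ← hlx] <;> ring
      · refine ⟨![y, l - x], ?_, ?_⟩
        · intro h
          have := congrFun h 1
          simp at this
          exact hlx (by linarith)
        · funext i
          fin_cases i <;>
            simp [Matrix.mulVec, dotProduct, Fin.sum_univ_two]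
          · ring
          · linear_combination hchar - hs2 / 2
    · refine ⟨![y, l - x], ?_, ?_⟩
      · intro h
        exact hy (by simpa using congrFun h 0)
      · funext i
        fin_cases i <;>
          simp [Matrix.mulVec, dotProduct, Fin.sum_univ_two]
        · ring
        · linear_combination hchar - hs2 / 2

theorem stmt_19 (a b c d : ℝ) (A J : Matrix (Fin 2) (Fin 2) ℝ)
    (hA : A = !![a, b; c, d]) (hJ : J = !![0, -1; 1, 0])
    (mR mT p : ℝ) (hmR : mR = (a + d) / 2) (hmT : mT = (c - b) / 2)
    (hp : p = (1 / 2) * Real.sqrt ((a - d) ^ 2 + (b + c) ^ 2))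
    (htr : A.trace < 0) (hdet : 0 < A.det) (hreac : 0 < mR + p)
    (pT : ℝ) (hpT : pT = Real.sqrt (p ^ 2 - mR ^ 2)) :
    0 < pT ∧
    ∀ k : ℝ,
      (∃ lam : ℝ, 0 < lam ∧ ∃ V : Fin 2 → ℝ, V ≠ 0 ∧ (A + k • J).mulVec V = lam • V) ↔
        (mT - pT < -k ∧ -k < mT + pT) := by
  subst hA hJ hmR hmT hp hpT
  have htr' : a + d < 0 := by
    simpa [Matrix.trace, Fin.sum_univ_two] using htr
  have hdet' : 0 < a * d - b * c := by
    simpa [Matrix.det_fin_two_of] using hdet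
  have hp2 : ((1:ℝ) / 2 * Real.sqrt ((a - d) ^ 2 + (b + c) ^ 2)) ^ 2
      = ((a - d) ^ 2 + (b + c) ^ 2) / 4 := by
    rw [mul_pow, Real.sq_sqrt (by positivity)]; ring
  set p := (1:ℝ) / 2 * Real.sqrt ((a - d) ^ 2 + (b + c) ^ 2) with hp_def
  have hpnn : 0 ≤ p := by positivity
  have hpm : 0 < p ^ 2 - ((a + d) / 2) ^ 2 := by nlinarith
  have hpT2 : (Real.sqrt (p ^ 2 - ((a + d) / 2) ^ 2)) ^ 2 = p ^ 2 - ((a + d) / 2) ^ 2 :=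
    Real.sq_sqrt hpm.le
  set pT := Real.sqrt (p ^ 2 - ((a + d) / 2) ^ 2) with hpT_def
  have hpTpos : 0 < pT := Real.sqrt_pos.mpr hpm
  refine ⟨hpTpos, fun k => ?_⟩
  have hB : !![a, b; c, d] + k • !![0, -1; 1, 0] = !![a, b - k; c + k, d] := by
    ext i j
    fin_cases i <;> fin_cases j <;> simp <;> ring
  rw [hB, eig_key a (b - k) (c + k) d htr']
  constructor
  · intro h
    constructor <;> nlinarith [sq_nonneg (k + (c - b) / 2 + pT), sq_nonneg (k + (c - b) / 2 - pT)]
  · rintro ⟨h1, h2⟩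
    nlinarith [sq_nonneg (k + (c - b) / 2)]
end
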